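/- arXiv:2605.04181 — 4 statements merged into one kernel-verified Lean document; each statement's English description precedes it below -/
import Mathlib

section
/- Let λ > 0, 0 < κ ≤ 1, 0 < m < M with M·κ ≤ 1, and let a > 0, c₀ > 0. Let G : ℝ² → ℝ be measurable with G ≥ 0 on the positive half-packet 𝒫_λ⁺ = {(x,y) : 0 < x < λ, 0 < y < λ}, and suppose G(x,y) ≥ c₀·a·y for all (x,y) in the cone {0 < x < κλ, m·x < y < M·x}. Then the local hyperbolic mass satisfies ℋ_λ[G] ≥ c₀·a·κ·λ·∫_m^M s²/(1+s²)² ds. -/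
open MeasureTheory

/-- The leading hyperbolic compression kernel `K₀(x,y) = x·y/(x²+y²)²`. -/
noncomputable def K0 (x y : ℝ) : ℝ := x * y / (x ^ 2 + y ^ 2) ^ 2

/-!
On the cone `{m·x < y < M·x}` the core profile is `a·y`, and `K₀(x,y)·y` is homogeneous of degree
`-1`; so after the substitution `y = s·x` every vertical slice of the cone carries the same mass
`∫_m^M s²/(1+s²)² ds`, and integrating over `0 < x < κλ` gives the factor `κλ`. The integrand
`ofReal (K₀·G)` is nonnegative everywhere, so discarding the rest of the packet only lowers the mass.
-/

open Set

theorem setLIntegral_prod_eq_lintegral_sections {α β : Type*} [MeasurableSpace α]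
    [MeasurableSpace β] {μ : Measure α} {ν : Measure β} [SFinite ν] {s : Set α}
    {t : α → Set β} (hs : MeasurableSet s) (hst : MeasurableSet {p : α × β | p.1 ∈ s ∧ p.2 ∈ t p.1})
    {f : α × β → ENNReal} (hf : Measurable f) :
    ∫⁻ p in {p : α × β | p.1 ∈ s ∧ p.2 ∈ t p.1}, f p ∂μ.prod ν
      = ∫⁻ x in s, ∫⁻ y in t x, f (x, y) ∂ν ∂μ := by
  rw [← lintegral_indicator hst, lintegral_prod _ (hf.indicator hst).aemeasurable,
    ← lintegral_indicator hs]
  congr 1 with x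
  by_cases hx : x ∈ s
  · have hsection : t x = Prod.mk x ⁻¹' {p : α × β | p.1 ∈ s ∧ p.2 ∈ t p.1} := by
      ext y; simp [hx]
    rw [indicator_of_mem hx, ← lintegral_indicator (hsection ▸ measurable_prodMk_left hst)]
    congr 1 with y
    by_cases hy : y ∈ t x <;> simp [indicator, hx, hy]
  · simp [indicator, hx]

theorem K0_nonneg {x y : ℝ} (hx : 0 ≤ x) (hy : 0 ≤ y) : 0 ≤ K0 x y := by
  unfold K0; positivity

theorem K0_mul_snd_nonneg {x : ℝ} (hx : 0 ≤ x) (y : ℝ) : 0 ≤ K0 x y * y := by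
  have h : K0 x y * y = x * y ^ 2 / (x ^ 2 + y ^ 2) ^ 2 := by unfold K0; ring
  rw [h]; positivity

theorem intervalIntegral_K0_mul_snd {x : ℝ} (hx : x ≠ 0) (m M : ℝ) :
    ∫ y in m * x..M * x, K0 x y * y = ∫ s in m..M, s ^ 2 / (1 + s ^ 2) ^ 2 := by
  rw [← intervalIntegral.smul_integral_comp_mul_right, smul_eq_mul,
    ← intervalIntegral.integral_const_mul]
  refine intervalIntegral.integral_congr fun s _ => ?_
  simp only [K0]
  field_simp

def truncatedCone (b m M : ℝ) : Set (ℝ × ℝ) :=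
  {p | p.1 ∈ Ioo 0 b ∧ p.2 ∈ Ioo (m * p.1) (M * p.1)}

theorem measurableSet_truncatedCone (b m M : ℝ) : MeasurableSet (truncatedCone b m M) :=
  (measurableSet_Ioo.preimage measurable_fst).inter
    ((measurableSet_lt (measurable_fst.const_mul m) measurable_snd).inter
      (measurableSet_lt measurable_snd (measurable_fst.const_mul M)))

theorem truncatedCone_subset {b m M lam : ℝ} (hm : 0 ≤ m) (hb : b ≤ lam) (hMb : M * b ≤ lam) :
    truncatedCone b m M ⊆ {p : ℝ × ℝ | 0 < p.1 ∧ p.1 < lam ∧ 0 < p.2 ∧ p.2 < lam} := by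
  rintro ⟨x, y⟩ ⟨⟨hx0, hxb⟩, hmy, hyM⟩
  have hy0 : 0 < y := by dsimp only at hmy; nlinarith
  refine ⟨hx0, hxb.trans_le hb, hy0, ?_⟩
  dsimp only at hyM
  nlinarith

theorem setLIntegral_Ioo_K0_mul_snd {x m M : ℝ} (hx : 0 < x) (hmM : m ≤ M) :
    ∫⁻ y in Ioo (m * x) (M * x), ENNReal.ofReal (K0 x y * y)
      = ENNReal.ofReal (∫ s in m..M, s ^ 2 / (1 + s ^ 2) ^ 2) := by
  have hcont : Continuous fun y => K0 x y * y := by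
    unfold K0
    fun_prop (disch := intro y; positivity)
  rw [← ofReal_integral_eq_lintegral_ofReal (hcont.integrableOn_Icc.mono_set Ioo_subset_Icc_self)
      (ae_restrict_of_forall_mem measurableSet_Ioo fun y _ => K0_mul_snd_nonneg hx.le y),
    ← integral_Ioc_eq_integral_Ioo, ← intervalIntegral.integral_of_le (by nlinarith),
    intervalIntegral_K0_mul_snd hx.ne']

theorem setLIntegral_truncatedCone_K0_mul_snd {b m M C : ℝ} (hmM : m ≤ M) (hC : 0 ≤ C) :
    ∫⁻ p in truncatedCone b m M, ENNReal.ofReal (C * (K0 p.1 p.2 * p.2))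
      = ENNReal.ofReal (C * b * ∫ s in m..M, s ^ 2 / (1 + s ^ 2) ^ 2) := by
  have hI : 0 ≤ ∫ s in m..M, s ^ 2 / (1 + s ^ 2) ^ 2 :=
    intervalIntegral.integral_nonneg hmM fun s _ => by positivity
  have hslice : ∀ x ∈ Ioo 0 b, ∫⁻ y in Ioo (m * x) (M * x), ENNReal.ofReal (C * (K0 x y * y))
      = ENNReal.ofReal (C * ∫ s in m..M, s ^ 2 / (1 + s ^ 2) ^ 2) := fun x hx => by
    simp_rw [ENNReal.ofReal_mul hC]
    rw [lintegral_const_mul' _ _ ENNReal.ofReal_ne_top, setLIntegral_Ioo_K0_mul_snd hx.1 hmM]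
  rw [truncatedCone, Measure.volume_eq_prod,
    setLIntegral_prod_eq_lintegral_sections (t := fun x => Ioo (m * x) (M * x)) measurableSet_Ioo
      (by exact measurableSet_truncatedCone b m M) (by unfold K0; fun_prop),
    setLIntegral_congr_fun measurableSet_Ioo hslice, setLIntegral_const, Real.volume_Ioo,
    sub_zero, ← ENNReal.ofReal_mul (by positivity), mul_right_comm]

theorem packet_core_lower_bound_general (lam κ m M a c₀ : ℝ)
    (hlam : 0 < lam) (hκ : κ ≤ 1) (hm : 0 < m) (hmM : m < M)
    (hMκ : M * κ ≤ 1) (ha : 0 < a) (hc₀ : 0 < c₀)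
    (G : ℝ × ℝ → ℝ)
    (hcore : ∀ p : ℝ × ℝ, 0 < p.1 → p.1 < κ * lam → m * p.1 < p.2 → p.2 < M * p.1 →
      c₀ * a * p.2 ≤ G p) :
    ENNReal.ofReal (c₀ * a * κ * lam * ∫ s in m..M, s ^ 2 / (1 + s ^ 2) ^ 2)
      ≤ ∫⁻ p in {p : ℝ × ℝ | 0 < p.1 ∧ p.1 < lam ∧ 0 < p.2 ∧ p.2 < lam},
          ENNReal.ofReal (K0 p.1 p.2 * G p) := by
  have hcone : truncatedCone (κ * lam) m M
      ⊆ {p : ℝ × ℝ | 0 < p.1 ∧ p.1 < lam ∧ 0 < p.2 ∧ p.2 < lam} :=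
    truncatedCone_subset hm.le (by nlinarith) (by nlinarith)
  calc ENNReal.ofReal (c₀ * a * κ * lam * ∫ s in m..M, s ^ 2 / (1 + s ^ 2) ^ 2)
      = ∫⁻ p in truncatedCone (κ * lam) m M, ENNReal.ofReal (c₀ * a * (K0 p.1 p.2 * p.2)) := by
        rw [setLIntegral_truncatedCone_K0_mul_snd hmM.le (by positivity), ← mul_assoc]
    _ ≤ ∫⁻ p in truncatedCone (κ * lam) m M, ENNReal.ofReal (K0 p.1 p.2 * G p) := by
        refine setLIntegral_mono' (measurableSet_truncatedCone _ _ _) fun p hp => ?_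
        obtain ⟨⟨hx0, hxb⟩, hmy, hyM⟩ := hp
        have hK0 := K0_nonneg hx0.le (by nlinarith : 0 ≤ p.2)
        refine ENNReal.ofReal_le_ofReal ?_
        rw [mul_left_comm]
        exact mul_le_mul_of_nonneg_left (hcore p hx0 hxb hmy hyM) hK0
    _ ≤ _ := lintegral_mono_set hcone

/-- Lower bound in the packet–core coupling: if `G ≥ 0` on the positive half-packet
`𝒫_λ⁺` and `G(x,y) ≥ c₀·a·y` on the cone `{0 < x < κλ, m·x < y < M·x}`, then the
local hyperbolic mass `ℋ_λ[G] = ∫_{𝒫_λ⁺} K₀·G` is at least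
`c₀·a·κ·λ·∫_m^M s²/(1+s²)² ds`. -/
theorem packet_core_lower_bound (lam κ m M a c₀ : ℝ)
    (hlam : 0 < lam) (hκ0 : 0 < κ) (hκ : κ ≤ 1) (hm : 0 < m) (hmM : m < M)
    (hMκ : M * κ ≤ 1) (ha : 0 < a) (hc₀ : 0 < c₀)
    (G : ℝ × ℝ → ℝ) (hmeas : Measurable G)
    (hpos : ∀ p : ℝ × ℝ, 0 < p.1 → p.1 < lam → 0 < p.2 → p.2 < lam → 0 ≤ G p)
    (hcore : ∀ p : ℝ × ℝ, 0 < p.1 → p.1 < κ * lam → m * p.1 < p.2 → p.2 < M * p.1 →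
      c₀ * a * p.2 ≤ G p) :
    ENNReal.ofReal (c₀ * a * κ * lam * ∫ s in m..M, s ^ 2 / (1 + s ^ 2) ^ 2)
      ≤ ∫⁻ p in {p : ℝ × ℝ | 0 < p.1 ∧ p.1 < lam ∧ 0 < p.2 ∧ p.2 < lam},
          ENNReal.ofReal (K0 p.1 p.2 * G p) :=
  packet_core_lower_bound_general lam κ m M a c₀ hlam hκ hm hmM hMκ ha hc₀ G hcore
end

section
/- Let c₁, c₂ > 0. There do not exist differentiable functions A, B : [0, ∞) → ℝ with A(0) > 0, B(0) > 0 such that A′(t) ≥ c₁·B(t)² and B′(t) ≥ c₂·A(t)·B(t) for all t ≥ 0. Equivalently, any solution of this differential inequality system with positive initial data blows up in finite time. -/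
/-!
Replacing `A` by the smaller function `Q` with `Q' = c₁B²`, `Q(0) = A(0)` turns the first
inequality into an equation, and then `c₁B² - c₂Q²` is nondecreasing: time can be eliminated
as for the system `X' = c₁Y², Y' = c₂XY`, whose orbits are `Y² = (c₂/c₁)X² + C₀`.
Since `Q` grows at least linearly, `Q' = c₁B² ≥ (c₂/2)Q²` from some time `t₀` on, and a positive
solution of this Riccati inequality blows up before time `t₀ + 2/(c₂Q(t₀))`.
-/

open Set Filter

section Ici

variable {f f' : ℝ → ℝ} {a : ℝ}

theorem monotoneOn_Ici_of_hasDerivWithinAt_nonneg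
    (hf : ∀ t ∈ Ici a, HasDerivWithinAt f (f' t) (Ici a) t) (hf' : ∀ t ∈ Ioi a, 0 ≤ f' t) :
    MonotoneOn f (Ici a) :=
  monotoneOn_of_hasDerivWithinAt_nonneg (convex_Ici a)
    (fun t ht => (hf t ht).continuousWithinAt)
    (fun t ht => by
      rw [interior_Ici] at ht ⊢
      exact (hf t (mem_Ici_of_Ioi ht)).mono Ioi_subset_Ici_self)
    (by simpa only [interior_Ici] using hf')

theorem add_mul_sub_le_of_le_hasDerivWithinAt {m : ℝ}
    (hf : ∀ t ∈ Ici a, HasDerivWithinAt f (f' t) (Ici a) t) (hf' : ∀ t ∈ Ioi a, m ≤ f' t) :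
    ∀ t ∈ Ici a, f a + m * (t - a) ≤ f t := by
  have : MonotoneOn (fun t => f t - m * t) (Ici a) :=
    monotoneOn_Ici_of_hasDerivWithinAt_nonneg
      (fun t ht => (hf t ht).sub ((hasDerivWithinAt_id t _).const_mul m))
      fun t ht => by simpa only [mul_one, sub_nonneg] using hf' t ht
  intro t ht
  linarith [this self_mem_Ici ht ht]

theorem le_image_of_deriv_pos_of_image_eq
    (hf : ∀ t ∈ Ici a, HasDerivWithinAt f (f' t) (Ici a) t)
    (hf' : ∀ t ∈ Ici a, f t = f a → 0 < f' t) : ∀ t ∈ Ici a, f a ≤ f t := by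
  intro t ht
  refine image_le_of_deriv_right_lt_deriv_boundary' (f := fun _ => f a) (f' := fun _ => 0)
    continuousOn_const (fun _ _ => hasDerivWithinAt_const _ _ _) le_rfl
    (fun s hs => (hf s hs.1).continuousWithinAt.mono Icc_subset_Ici_self)
    (fun s hs => (hf s hs.1).mono (Ici_subset_Ici.2 hs.1))
    (fun s hs hfs => hf' s hs.1 hfs.symm) ⟨ht, le_rfl⟩

theorem exists_hasDerivWithinAt_Ici_of_continuousOn {g : ℝ → ℝ} (hg : ContinuousOn g (Ici a))
    (c : ℝ) : ∃ G : ℝ → ℝ, G a = c ∧ ∀ t ∈ Ici a, HasDerivWithinAt G (g t) (Ici a) t := by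
  have hg' : Continuous fun t => g (max a t) :=
    hg.comp_continuous (continuous_const.max continuous_id) fun t => le_max_left a t
  refine ⟨fun t => c + ∫ s in a..t, g (max a s), by simp, fun t ht => ?_⟩
  have hG := ((hg'.integral_hasStrictDerivAt a t).hasDerivAt.const_add c).hasDerivWithinAt
    (s := Ici a)
  rwa [max_eq_right ht] at hG

theorem not_forall_sq_le_deriv {k : ℝ} (hk : 0 < k) (hfa : 0 < f a)
    (hf : ∀ t ∈ Ici a, HasDerivWithinAt f (f' t) (Ici a) t) :
    ¬ ∀ t ∈ Ici a, k * f t ^ 2 ≤ f' t := by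
  intro hf'
  have hf_mono := monotoneOn_Ici_of_hasDerivWithinAt_nonneg hf fun t ht =>
    (by positivity : 0 ≤ k * f t ^ 2).trans (hf' t (mem_Ici_of_Ioi ht))
  have hf_pos : ∀ t ∈ Ici a, 0 < f t := fun t ht =>
    hfa.trans_le (hf_mono self_mem_Ici ht ht)
  -- `1/f` decreases at rate at least `k` but stays positive
  have hψ : MonotoneOn (fun t => -(f t)⁻¹ - k * t) (Ici a) := by
    refine monotoneOn_Ici_of_hasDerivWithinAt_nonneg
      (fun t ht => ((hf t ht).inv (hf_pos t ht).ne').neg.sub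
        ((hasDerivWithinAt_id t _).const_mul k)) fun t ht => ?_
    have ht := mem_Ici_of_Ioi ht
    have := hf_pos t ht
    rw [neg_div, neg_neg, mul_one, sub_nonneg, le_div_iff₀ (by positivity)]
    exact hf' t ht
  set T := a + (k * f a)⁻¹
  have hT : a ≤ T := le_add_of_nonneg_right (by positivity)
  have hψT := hψ self_mem_Ici hT hT
  have hkT : k * T = k * a + (f a)⁻¹ := by
    rw [mul_add, mul_inv, mul_inv_cancel_left₀ hk.ne']
  have : 0 < (f T)⁻¹ := inv_pos.2 (hf_pos T hT)
  simp only [hkT] at hψT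
  linarith

end Ici

section ComparisonSystem

variable {c₁ c₂ a : ℝ} {Q B B' : ℝ → ℝ}

theorem monotoneOn_comparison_energy (hc₁ : 0 ≤ c₁)
    (hQ : ∀ t ∈ Ici a, HasDerivWithinAt Q (c₁ * B t ^ 2) (Ici a) t)
    (hB : ∀ t ∈ Ici a, HasDerivWithinAt B (B' t) (Ici a) t)
    (hB' : ∀ t ∈ Ici a, c₂ * Q t * B t ≤ B' t) (hB_nonneg : ∀ t ∈ Ici a, 0 ≤ B t) :
    MonotoneOn (fun t => c₁ * B t ^ 2 - c₂ * Q t ^ 2) (Ici a) := by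
  refine monotoneOn_Ici_of_hasDerivWithinAt_nonneg
    (fun t ht => (((hB t ht).pow 2).const_mul c₁).sub (((hQ t ht).pow 2).const_mul c₂))
    fun t ht => ?_
  have ht := mem_Ici_of_Ioi ht
  have key : 0 ≤ 2 * c₁ * B t * (B' t - c₂ * Q t * B t) :=
    mul_nonneg (mul_nonneg (by positivity) (hB_nonneg t ht)) (sub_nonneg.2 (hB' t ht))
  linear_combination key

theorem false_of_reduced_comparison (hc₁ : 0 < c₁) (hc₂ : 0 < c₂) (hQa : 0 < Q a) (hBa : 0 < B a)
    (hQ : ∀ t ∈ Ici a, HasDerivWithinAt Q (c₁ * B t ^ 2) (Ici a) t)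
    (hB : ∀ t ∈ Ici a, HasDerivWithinAt B (B' t) (Ici a) t)
    (hB' : ∀ t ∈ Ici a, c₂ * Q t * B t ≤ B' t) (hB_ge : ∀ t ∈ Ici a, B a ≤ B t) : False := by
  have hF := monotoneOn_comparison_energy hc₁.le hQ hB hB' fun t ht => hBa.le.trans (hB_ge t ht)
  have hQ_lin := add_mul_sub_le_of_le_hasDerivWithinAt (m := c₁ * B a ^ 2) hQ fun t ht => by
    have := hB_ge t (mem_Ici_of_Ioi ht)
    gcongr
  have hQ_top : Tendsto Q atTop atTop :=
    tendsto_atTop_mono' _ (eventually_ge_atTop a |>.mono hQ_lin) <|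
      tendsto_atTop_add_const_left _ _ <|
        (tendsto_atTop_add_const_right _ (-a) tendsto_id).const_mul_atTop (by positivity)
  obtain ⟨t₀, ht₀⟩ := eventually_atTop.1 <|
    ((tendsto_pow_atTop two_ne_zero).comp hQ_top).const_mul_atTop (half_pos hc₂)
      |>.eventually_ge_atTop (c₂ * Q a ^ 2 - c₁ * B a ^ 2)
  have hs : a ≤ max a t₀ := le_max_left a t₀
  refine not_forall_sq_le_deriv (half_pos hc₂) (a := max a t₀) ?_
    (fun t ht => (hQ t (hs.trans ht)).mono (Ici_subset_Ici.2 hs)) fun t ht => ?_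
  · have := hQ_lin _ hs
    have : 0 ≤ c₁ * B a ^ 2 * (max a t₀ - a) := mul_nonneg (by positivity) (sub_nonneg.2 hs)
    linarith
  · have h_energy : c₁ * B a ^ 2 - c₂ * Q a ^ 2 ≤ c₁ * B t ^ 2 - c₂ * Q t ^ 2 :=
      hF self_mem_Ici (hs.trans ht) (hs.trans ht)
    have h_large : c₂ * Q a ^ 2 - c₁ * B a ^ 2 ≤ c₂ / 2 * Q t ^ 2 :=
      ht₀ t (le_max_right a t₀ |>.trans ht)
    linarith

end ComparisonSystem

/-- Finite-time blow-up of the comparison system (Theorem 9.1): there are no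
globally defined differentiable `A, B : [0,∞) → ℝ` with positive initial data
satisfying `A′ ≥ c₁B²` and `B′ ≥ c₂AB` for all `t ≥ 0`. -/
theorem no_global_comparison_solution (c₁ c₂ : ℝ) (hc₁ : 0 < c₁) (hc₂ : 0 < c₂) :
    ¬ ∃ A B A' B' : ℝ → ℝ,
      0 < A 0 ∧ 0 < B 0 ∧
      ∀ t : ℝ, 0 ≤ t →
        HasDerivWithinAt A (A' t) (Set.Ici 0) t ∧
        HasDerivWithinAt B (B' t) (Set.Ici 0) t ∧
        c₁ * (B t) ^ 2 ≤ A' t ∧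
        c₂ * A t * B t ≤ B' t := by
  rintro ⟨A, B, A', B', hA0, hB0, hsys⟩
  have hA := fun t ht => (hsys t ht).1
  have hB := fun t ht => (hsys t ht).2.1
  have hB_cont : ContinuousOn B (Ici 0) := fun t ht => (hB t ht).continuousWithinAt
  obtain ⟨Q, hQ0, hQ⟩ := exists_hasDerivWithinAt_Ici_of_continuousOn
    (by fun_prop : ContinuousOn (fun t => c₁ * B t ^ 2) (Ici 0)) (A 0)
  have hA_mono := monotoneOn_Ici_of_hasDerivWithinAt_nonneg hA fun t ht =>
    (by positivity : 0 ≤ c₁ * B t ^ 2).trans (hsys t (le_of_lt ht)).2.2.1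
  have hA_pos : ∀ t ∈ Ici (0 : ℝ), 0 < A t := fun t ht => hA0.trans_le (hA_mono self_mem_Ici ht ht)
  have hB_ge := le_image_of_deriv_pos_of_image_eq hB fun t ht hBt => by
    have := hA_pos t ht
    calc 0 < c₂ * A t * B t := by rw [hBt]; positivity
      _ ≤ B' t := (hsys t ht).2.2.2
  have hQ_le : ∀ t ∈ Ici (0 : ℝ), Q t ≤ A t := by
    have : MonotoneOn (fun t => A t - Q t) (Ici 0) :=
      monotoneOn_Ici_of_hasDerivWithinAt_nonneg (fun t ht => (hA t ht).sub (hQ t ht))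
      fun t ht => sub_nonneg.2 (hsys t (le_of_lt ht)).2.2.1
    intro t ht
    linarith [this self_mem_Ici ht ht]
  refine false_of_reduced_comparison hc₁ hc₂ (hQ0 ▸ hA0) hB0 hQ hB (fun t ht => ?_) hB_ge
  have := hB0.le.trans (hB_ge t ht)
  calc c₂ * Q t * B t ≤ c₂ * A t * B t := by gcongr; exact hQ_le t ht
    _ ≤ B' t := (hsys t ht).2.2.2
end

section
/- Let T ∈ (0, ∞], let σ : [0,T) → [0,∞) be continuous, and let ρ : [0,T) → [0,∞) be differentiable. Let c₀, C > 0, ε > 0, δ ≥ 0 satisfy δ ≤ c₀·ε/2 and 32·C·ε ≤ c₀. Assume ρ′(t) ≤ −c₀·σ(t)·ρ(t) + δ·σ(t) + C·σ(t)·ρ(t)² for all t ∈ [0,T), and ρ(0) ≤ ε. Then ρ(t) ≤ 2·ε for all t ∈ [0,T). -/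
/-!
On the band `2ε ≤ ρ ≤ 4ε` the right-hand side `σ (δ + Cρ² - c₀ρ)` is nonpositive, because
`32Cε ≤ c₀` makes the quadratic term at most `c₀ρ/8` and `δ ≤ c₀ε/2` is dominated by the damping.
A function whose right derivative is nonpositive whenever it lies in a band `[U, U']` cannot
climb through the level `U`: fence it by the lines `U + η (t - a)`, which for small `η` meet `f`
only inside the band, where `f' ≤ 0 < η`, and let `η → 0`.
-/

open Set Filter Topology

theorem image_le_of_deriv_right_nonpos_of_mem_Icc {f f' : ℝ → ℝ} {a b U U' : ℝ} (hUU' : U < U')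
    (hf : ContinuousOn f (Icc a b)) (hf' : ∀ x ∈ Ico a b, HasDerivWithinAt f (f' x) (Ici x) x)
    (ha : f a ≤ U) (hband : ∀ x ∈ Ico a b, f x ∈ Icc U U' → f' x ≤ 0) :
    ∀ ⦃x⦄, x ∈ Icc a b → f x ≤ U := by
  have fenced : ∀ η > 0, η * (b - a) < U' - U → ∀ ⦃x⦄, x ∈ Icc a b → f x ≤ U + η * (x - a) := by
    intro η hη hηb
    refine image_le_of_deriv_right_lt_deriv_boundary hf hf' (B' := fun _ => η) (by simpa) ?_ ?_
    · intro x
      simpa using (((hasDerivAt_id x).sub_const a).const_mul η).const_add U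
    · intro x hx hfx
      have hxa : 0 ≤ η * (x - a) := mul_nonneg hη.le (sub_nonneg.2 hx.1)
      have hxb : η * (x - a) ≤ η * (b - a) := by gcongr; exact hx.2.le
      have := hband x hx ⟨by linarith, by linarith⟩
      linarith
  intro x hx
  have hsmall : ∀ᶠ η in 𝓝[>] (0 : ℝ), η * (b - a) < U' - U := by
    refine nhdsWithin_le_nhds (Tendsto.eventually_lt_const (sub_pos.2 hUU') ?_)
    simpa using (continuous_mul_const (b - a)).tendsto 0
  have hline : Tendsto (fun η => U + η * (x - a)) (𝓝[>] 0) (𝓝 U) := by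
    refine tendsto_nhdsWithin_of_tendsto_nhds ?_
    simpa using ((continuous_mul_const (x - a)).const_add U).tendsto 0
  exact ge_of_tendsto hline ((hsmall.and self_mem_nhdsWithin).mono fun η hη => fenced η hη.2 hη.1 hx)

theorem riccati_drift_nonpos {c₀ C ε δ σ r : ℝ} (hC : 0 < C) (hε : 0 < ε)
    (hδε : δ ≤ c₀ * ε / 2) (hCε : 32 * C * ε ≤ c₀) (hσ : 0 ≤ σ) (hr : r ∈ Icc (2 * ε) (4 * ε)) :
    -c₀ * σ * r + δ * σ + C * σ * r ^ 2 ≤ 0 := by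
  obtain ⟨hr₁, hr₂⟩ := hr
  have hr₀ : 0 ≤ r := by linarith
  have hc₀ : 0 < c₀ := by nlinarith
  have hquad : C * r ^ 2 ≤ c₀ * r / 8 := by
    nlinarith [mul_nonneg (mul_nonneg hC.le hr₀) (sub_nonneg.2 hr₂),
      mul_le_mul_of_nonneg_right hCε hr₀]
  have hlin : 2 * c₀ * ε ≤ c₀ * r := by nlinarith
  have hc₀r : 0 ≤ c₀ * r := by positivity
  calc -c₀ * σ * r + δ * σ + C * σ * r ^ 2 = σ * (δ + C * r ^ 2 - c₀ * r) := by ring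
    _ ≤ 0 := mul_nonpos_of_nonneg_of_nonpos hσ (by linarith)

theorem anisotropy_persistence_general (T : EReal)
    (S : Set ℝ) (hS : S = {t : ℝ | 0 ≤ t ∧ (t : EReal) < T})
    (σ ρ : ℝ → ℝ) (hσ0 : ∀ t ∈ S, 0 ≤ σ t)
    (c₀ C ε δ : ℝ) (hC : 0 < C) (hε : 0 < ε)
    (hδε : δ ≤ c₀ * ε / 2) (hCε : 32 * C * ε ≤ c₀)
    (hρ : ∀ t ∈ S, ∃ d, HasDerivWithinAt ρ d S t ∧
      d ≤ -c₀ * σ t * ρ t + δ * σ t + C * σ t * (ρ t) ^ 2)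
    (h0 : ρ 0 ≤ ε) :
    ∀ t ∈ S, ρ t ≤ 2 * ε := by
  subst hS
  choose! ρ' hρ' hρ'_le using hρ
  intro t ⟨ht₀, htT⟩
  have hIcc : ∀ ⦃s⦄, s ∈ Icc 0 t → 0 ≤ s ∧ (s : EReal) < T :=
    fun s hs => ⟨hs.1, (EReal.coe_le_coe_iff.2 hs.2).trans_lt htT⟩
  have hIco : ∀ ⦃s⦄, s ∈ Ico 0 t → 0 ≤ s ∧ (s : EReal) < T :=
    fun s hs => hIcc (Ico_subset_Icc_self hs)
  have hright : ∀ s ∈ Ico 0 t, HasDerivWithinAt ρ (ρ' s) (Ici s) s := fun s hs =>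
    (hρ' s (hIco hs)).mono_of_mem_nhdsWithin <|
      mem_of_superset (Icc_mem_nhdsGE hs.2) fun u hu => hIcc ⟨hs.1.trans hu.1, hu.2⟩
  refine image_le_of_deriv_right_nonpos_of_mem_Icc (U' := 4 * ε) (by linarith)
    (fun s hs => (hρ' s (hIcc hs)).continuousWithinAt.mono hIcc) hright (by linarith)
    (fun s hs hband => (hρ'_le s (hIco hs)).trans
      (riccati_drift_nonpos hC hε hδε hCε (hσ0 s (hIco hs)) hband))
    ⟨ht₀, le_rfl⟩

/-- Radial-swirl anisotropy persistence (ODE content of Lemma 7.2): if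
`ρ ≥ 0` satisfies `ρ′ ≤ −c₀σρ + δσ + Cσρ²` on `[0,T)` with `σ ≥ 0`
continuous, `δ ≤ c₀ε/2`, `32Cε ≤ c₀`, and `ρ(0) ≤ ε`, then `ρ ≤ 2ε` on
`[0,T)`. -/
theorem anisotropy_persistence (T : EReal) (hT : 0 < T)
    (S : Set ℝ) (hS : S = {t : ℝ | 0 ≤ t ∧ (t : EReal) < T})
    (σ ρ : ℝ → ℝ) (hσc : ContinuousOn σ S) (hσ0 : ∀ t ∈ S, 0 ≤ σ t)
    (hρ0 : ∀ t ∈ S, 0 ≤ ρ t)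
    (c₀ C ε δ : ℝ) (hc₀ : 0 < c₀) (hC : 0 < C) (hε : 0 < ε) (hδ : 0 ≤ δ)
    (hδε : δ ≤ c₀ * ε / 2) (hCε : 32 * C * ε ≤ c₀)
    (hρ : ∀ t ∈ S, ∃ d, HasDerivWithinAt ρ d S t ∧
      d ≤ -c₀ * σ t * ρ t + δ * σ t + C * σ t * (ρ t) ^ 2)
    (h0 : ρ 0 ≤ ε) :
    ∀ t ∈ S, ρ t ≤ 2 * ε :=
  anisotropy_persistence_general T S hS σ ρ hσ0 c₀ C ε δ hC hε hδε hCε hρ h0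
end

section
/- Let c₁, c₂ > 0. There do not exist continuous functions A, B : [0, ∞) → ℝ with A(0) > 0, B(0) > 0 such that for every t ≥ 0 the lower right Dini derivatives satisfy liminf_{h→0⁺} (A(t+h) − A(t))/h ≥ c₁·B(t)² and liminf_{h→0⁺} (B(t+h) − B(t))/h ≥ c₂·A(t)·B(t). -/
/-!
The explicit profile `X = α / (T - t)`, `Y = β / (T - t)` blows up at `T` and, for suitable
`α, β`, is a strict subsolution of `X' = c₁ Y²`, `Y' = c₂ X Y`. Choose `T` so that it starts
below `(A, B)`. Fencing `max (X - A) (Y - B)` below `0` with the lower right Dini bounds keeps the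
profile below `(A, B)` on `[0, T)`, so `B ≥ β / (T - t) → ∞` as `t → T⁻`, contradicting the
continuity of `B` at `T`.
-/

open Filter Set Topology

noncomputable def lowerRightDini (f : ℝ → ℝ) (x : ℝ) : EReal :=
  liminf (fun h : ℝ => (((f (x + h) - f x) / h : ℝ) : EReal)) (𝓝[>] 0)

theorem eventually_lt_slope_of_le_lowerRightDini {f : ℝ → ℝ} {x c c' : ℝ}
    (h : (c : EReal) ≤ lowerRightDini f x) (hc : c' < c) :
    ∀ᶠ z in 𝓝[>] x, c' < slope f x z := by
  have hlt : ((c' : ℝ) : EReal) < lowerRightDini f x := (EReal.coe_lt_coe hc).trans_le h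
  have hmap : map (x + ·) (𝓝[>] (0 : ℝ)) = 𝓝[>] x := by
    simp only [map_add_left_nhdsGT, add_zero]
  rw [← hmap, eventually_map]
  filter_upwards [eventually_lt_of_lt_liminf hlt] with h hh
  rw [slope_def_field, add_sub_cancel_left]
  exact_mod_cast hh

theorem slope_max_le {u v : ℝ → ℝ} {x z : ℝ} (hxz : x ≤ z) :
    slope (fun t => max (u t) (v t)) x z ≤ max (slope u x z) (slope v x z) := by
  simp only [slope_def_module, smul_eq_mul,
    ← mul_max_of_nonneg _ _ (inv_nonneg.2 (sub_nonneg.2 hxz))]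
  gcongr
  rcases le_total (u z) (v z) with h | h
  · simp only [max_eq_right h]
    exact le_max_of_le_right (by linarith [le_max_right (u x) (v x)])
  · simp only [max_eq_left h]
    exact le_max_of_le_left (by linarith [le_max_left (u x) (v x)])

theorem eventually_slope_sub_lt {X A : ℝ → ℝ} {x X' g r : ℝ}
    (hX : HasDerivWithinAt X X' (Ici x) x) (hA : (g : EReal) ≤ lowerRightDini A x)
    (hr : X' - g < r) : ∀ᶠ z in 𝓝[>] x, slope (fun t => X t - A t) x z < r := by
  obtain ⟨ε, hε, hεr⟩ : ∃ ε > 0, X' - g + 2 * ε < r :=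
    ⟨(r - (X' - g)) / 4, by linarith, by linarith⟩
  filter_upwards [hX.Ioi_of_Ici.limsup_slope_le' (lt_irrefl x) (lt_add_of_pos_right X' hε),
    eventually_lt_slope_of_le_lowerRightDini hA (sub_lt_self g hε)] with z hXz hAz
  have hsub : slope (fun t => X t - A t) x z = slope X x z - slope A x z := by
    simp only [slope_def_field]
    ring
  linarith

theorem le_of_strict_dini_subsolution {X Y A B X' Y' gA gB : ℝ → ℝ} {a b : ℝ}
    (hXc : ContinuousOn X (Icc a b)) (hYc : ContinuousOn Y (Icc a b))
    (hAc : ContinuousOn A (Icc a b)) (hBc : ContinuousOn B (Icc a b))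
    (hX : ∀ x ∈ Ico a b, HasDerivWithinAt X (X' x) (Ici x) x)
    (hY : ∀ x ∈ Ico a b, HasDerivWithinAt Y (Y' x) (Ici x) x)
    (hA : ∀ x ∈ Ico a b, (gA x : EReal) ≤ lowerRightDini A x)
    (hB : ∀ x ∈ Ico a b, (gB x : EReal) ≤ lowerRightDini B x)
    (hXA : X a ≤ A a) (hYB : Y a ≤ B a)
    (hstrict : ∀ x ∈ Ico a b, X x ≤ A x → Y x ≤ B x → X' x < gA x ∧ Y' x < gB x) :
    ∀ x ∈ Icc a b, X x ≤ A x ∧ Y x ≤ B x := by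
  have key := image_le_of_liminf_slope_right_lt_deriv_boundary'
    (f := fun t => max (X t - A t) (Y t - B t))
    (f' := fun x => max (X' x - gA x) (Y' x - gB x)) (B := 0) (B' := 0)
    ((hXc.sub hAc).sup (hYc.sub hBc))
    (fun x hx r hr => Eventually.frequently <| by
      filter_upwards [eventually_slope_sub_lt (hX x hx) (hA x hx) (max_lt_iff.1 hr).1,
        eventually_slope_sub_lt (hY x hx) (hB x hx) (max_lt_iff.1 hr).2,
        self_mem_nhdsWithin] with z hXz hYz hz
      exact (slope_max_le (le_of_lt hz)).trans_lt (max_lt hXz hYz))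
    (max_le (sub_nonpos.2 hXA) (sub_nonpos.2 hYB)) continuousOn_const
    (fun x _ => hasDerivWithinAt_const x _ 0)
    (fun x hx hfx => by
      obtain ⟨hXx, hYx⟩ := max_le_iff.1 hfx.le
      obtain ⟨h1, h2⟩ := hstrict x hx (sub_nonpos.1 hXx) (sub_nonpos.1 hYx)
      exact max_lt (sub_neg.2 h1) (sub_neg.2 h2))
  intro x hx
  obtain ⟨hXx, hYx⟩ := max_le_iff.1 (key hx)
  exact ⟨sub_nonpos.1 hXx, sub_nonpos.1 hYx⟩

theorem hasDerivAt_inv_sub {T t : ℝ} (h : t ≠ T) :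
    HasDerivAt (fun s => (T - s)⁻¹) ((T - t)⁻¹ ^ 2) t :=
  (((hasDerivAt_id' t).const_sub T).inv (sub_ne_zero.2 h.symm)).congr_deriv
    (by rw [neg_neg, one_div, inv_pow])

theorem tendsto_const_mul_inv_sub_atTop {T β : ℝ} (hβ : 0 < β) :
    Tendsto (fun t => β * (T - t)⁻¹) (𝓝[<] T) atTop := by
  have hsub : Tendsto (fun t => T - t) (𝓝[<] T) (𝓝[>] 0) := by
    refine tendsto_nhdsWithin_of_tendsto_nhds_of_eventually_within _ ?_
      (eventually_nhdsWithin_of_forall fun t ht => mem_Ioi.2 (sub_pos.2 ht))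
    simpa using (tendsto_const_nhds.sub tendsto_id : Tendsto (T - ·) (𝓝 T) _).mono_left
      nhdsWithin_le_nhds
  exact (tendsto_inv_nhdsGT_zero.comp hsub).const_mul_atTop hβ

/-- With these constants the profile `(α / (T - t), β / (T - t))` is a strict subsolution of
`X' = c₁ Y², Y' = c₂ X Y` (`blowupProfile_deriv_lt`). -/
theorem exists_blowup_constants {c₁ c₂ : ℝ} (hc₁ : 0 < c₁) (hc₂ : 0 < c₂) :
    ∃ α β : ℝ, 0 < α ∧ 0 < β ∧ 1 < c₂ * α ∧ α < c₁ * β ^ 2 := by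
  set α := 2 / c₂
  have hα : 0 < α := by positivity
  refine ⟨α, 1 + α / c₁, hα, by positivity, by rw [mul_div_cancel₀ _ hc₂.ne']; norm_num, ?_⟩
  calc α < c₁ * (1 + α / c₁) := by rw [mul_add, mul_div_cancel₀ _ hc₁.ne']; linarith
    _ ≤ c₁ * (1 + α / c₁) ^ 2 := by
      gcongr
      exact le_self_pow₀ (by linarith [div_pos hα hc₁]) two_ne_zero

theorem blowupProfile_deriv_lt {c₁ c₂ α β s a b : ℝ} (hα : 0 < α) (hβ : 0 < β)
    (hαc : 1 < c₂ * α) (hβc : α < c₁ * β ^ 2) (hs : 0 < s) (ha : α * s ≤ a) (hb : β * s ≤ b) :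
    α * s ^ 2 < c₁ * b ^ 2 ∧ β * s ^ 2 < c₂ * a * b := by
  have hc₁ : 0 < c₁ := by nlinarith
  have hc₂ : 0 < c₂ := by nlinarith
  have ha₀ : 0 < a := (by positivity : 0 < α * s).trans_le ha
  constructor
  · calc α * s ^ 2 < c₁ * β ^ 2 * s ^ 2 := by gcongr
      _ = c₁ * (β * s) ^ 2 := by ring
      _ ≤ c₁ * b ^ 2 := by gcongr
  · calc β * s ^ 2 = 1 * (β * s ^ 2) := (one_mul _).symm
      _ < c₂ * α * (β * s ^ 2) := by gcongr
      _ = c₂ * (α * s) * (β * s) := by ring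
      _ ≤ c₂ * a * b := by gcongr

theorem blowupProfile_le_of_dini {c₁ c₂ α β T a b : ℝ} {A B : ℝ → ℝ}
    (hα : 0 < α) (hβ : 0 < β) (hαc : 1 < c₂ * α) (hβc : α < c₁ * β ^ 2) (hbT : b < T)
    (hAc : ContinuousOn A (Icc a b)) (hBc : ContinuousOn B (Icc a b))
    (hA : ∀ t ∈ Ico a b, ((c₁ * B t ^ 2 : ℝ) : EReal) ≤ lowerRightDini A t)
    (hB : ∀ t ∈ Ico a b, ((c₂ * A t * B t : ℝ) : EReal) ≤ lowerRightDini B t)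
    (hAa : α * (T - a)⁻¹ ≤ A a) (hBa : β * (T - a)⁻¹ ≤ B a) :
    ∀ t ∈ Icc a b, α * (T - t)⁻¹ ≤ A t ∧ β * (T - t)⁻¹ ≤ B t := by
  have hderiv : ∀ t ∈ Icc a b, HasDerivAt (fun s => (T - s)⁻¹) ((T - t)⁻¹ ^ 2) t :=
    fun t ht => hasDerivAt_inv_sub (ht.2.trans_lt hbT).ne
  have hcont : ContinuousOn (fun s => (T - s)⁻¹) (Icc a b) :=
    fun t ht => (hderiv t ht).continuousAt.continuousWithinAt
  refine le_of_strict_dini_subsolution (X' := fun t => α * (T - t)⁻¹ ^ 2)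
    (Y' := fun t => β * (T - t)⁻¹ ^ 2) (continuousOn_const.mul hcont)
    (continuousOn_const.mul hcont) hAc hBc
    (fun t ht => ((hderiv t (Ico_subset_Icc_self ht)).const_mul α).hasDerivWithinAt)
    (fun t ht => ((hderiv t (Ico_subset_Icc_self ht)).const_mul β).hasDerivWithinAt)
    hA hB hAa hBa fun t ht hXA hYB => ?_
  exact blowupProfile_deriv_lt hα hβ hαc hβc (inv_pos.2 (sub_pos.2 (ht.2.trans hbT))) hXA hYB

/-- Dini-derivative form of the comparison blow-up (Theorems 11.3 and 13.4):
there are no continuous `A, B : [0,∞) → ℝ` with positive initial data whose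
lower right Dini derivatives satisfy `D⁺A ≥ c₁B²` and `D⁺B ≥ c₂AB` for all
`t ≥ 0`. -/
theorem no_global_dini_comparison_solution (c₁ c₂ : ℝ) (hc₁ : 0 < c₁) (hc₂ : 0 < c₂) :
    ¬ ∃ A B : ℝ → ℝ,
      ContinuousOn A (Set.Ici 0) ∧ ContinuousOn B (Set.Ici 0) ∧
      0 < A 0 ∧ 0 < B 0 ∧
      ∀ t : ℝ, 0 ≤ t →
        ((c₁ * (B t) ^ 2 : ℝ) : EReal) ≤
          liminf (fun h : ℝ => (((A (t + h) - A t) / h : ℝ) : EReal))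
            (nhdsWithin 0 (Set.Ioi 0)) ∧
        ((c₂ * A t * B t : ℝ) : EReal) ≤
          liminf (fun h : ℝ => (((B (t + h) - B t) / h : ℝ) : EReal))
            (nhdsWithin 0 (Set.Ioi 0)) := by
  rintro ⟨A, B, hAc, hBc, hA0, hB0, hD⟩
  obtain ⟨α, β, hα, hβ, hαc, hβc⟩ := exists_blowup_constants hc₁ hc₂
  set s₀ := min (A 0 / α) (B 0 / β)
  have hs₀ : 0 < s₀ := lt_min (div_pos hA0 hα) (div_pos hB0 hβ)
  set T := s₀⁻¹
  have hT : 0 < T := inv_pos.2 hs₀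
  have hB_ge : ∀ t ∈ Ico 0 T, β * (T - t)⁻¹ ≤ B t := by
    intro t ht
    refine (blowupProfile_le_of_dini hα hβ hαc hβc ht.2 (hAc.mono Icc_subset_Ici_self)
      (hBc.mono Icc_subset_Ici_self) (fun s hs => (hD s hs.1).1) (fun s hs => (hD s hs.1).2)
      ?_ ?_ t (right_mem_Icc.2 ht.1)).2
    · rw [sub_zero, inv_inv, ← le_div_iff₀' hα]
      exact min_le_left _ _
    · rw [sub_zero, inv_inv, ← le_div_iff₀' hβ]
      exact min_le_right _ _
  have hB_atTop : Tendsto B (𝓝[<] T) atTop :=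
    tendsto_atTop_mono' _ (eventually_of_mem (Ioo_mem_nhdsLT hT)
      fun t ht => hB_ge t (Ioo_subset_Ico_self ht)) (tendsto_const_mul_inv_sub_atTop hβ)
  have hB_cont : ContinuousWithinAt B (Iio T) T :=
    (hBc T hT.le).mono_of_mem_nhdsWithin
      (mem_of_superset (Ioo_mem_nhdsLT hT) fun _ ht => le_of_lt ht.1)
  exact not_tendsto_atTop_of_tendsto_nhds hB_cont.tendsto hB_atTop
end
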